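/- Let f, g : [0, ∞) → ℝ be continuous functions and let f_n, g_n : [0, ∞) → ℝ converge to f and g respectively, uniformly on compact sets. Define τ = inf{t ≥ 0 : f(t) = g(t)} and τ_n = inf{t ≥ 0 : f_n(t) = g_n(t)} (with inf ∅ = ∞). Then liminf_n τ_n ≥ τ. -/
import Mathlib


open Set Filter

/-- The first meeting time (valued in `ℝ≥0∞`, with `inf ∅ = ∞`) of two paths
on `[0, ∞)`. -/
noncomputable def meetingTime (f g : ℝ → ℝ) : ENNReal :=
  sInf {x : ENNReal | ∃ t : ℝ, 0 ≤ t ∧ x = ENNReal.ofReal t ∧ f t = g t}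

/-- Lower semicontinuity of the first meeting time of two paths under locally
uniform convergence. -/
theorem stmt_10 (f g : ℝ → ℝ) (fn gn : ℕ → ℝ → ℝ)
    (hf : ContinuousOn f (Ici 0)) (hg : ContinuousOn g (Ici 0))
    (hfn : TendstoLocallyUniformlyOn fn f atTop (Ici 0))
    (hgn : TendstoLocallyUniformlyOn gn g atTop (Ici 0)) :
    meetingTime f g ≤ atTop.liminf fun n => meetingTime (fn n) (gn n) := by
  rw [le_liminf_iff]
  intro b hb
  -- pick b' strictly between b and meetingTime f g
  obtain ⟨b', hbb', hb'⟩ := exists_between hb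
  have hb'top : b' ≠ ⊤ := fun h => (h ▸ hb').not_ge le_top
  set T : ℝ := b'.toReal with hT
  have hT0 : 0 ≤ T := ENNReal.toReal_nonneg
  -- on [0, T], f and g never meet
  have hne : ∀ t ∈ Icc (0 : ℝ) T, f t ≠ g t := by
    intro t ht heq
    have : meetingTime f g ≤ ENNReal.ofReal t := sInf_le ⟨t, ht.1, rfl, heq⟩
    have h2 : ENNReal.ofReal t ≤ b' := by
      calc ENNReal.ofReal t ≤ ENNReal.ofReal T := ENNReal.ofReal_le_ofReal ht.2
        _ = b' := ENNReal.ofReal_toReal hb'top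
    exact absurd (this.trans h2) (not_le_of_gt hb')
  -- positive minimum of |f - g| on the compact [0, T]
  have hcomp : IsCompact (Icc (0 : ℝ) T) := isCompact_Icc
  have hsub : Icc (0 : ℝ) T ⊆ Ici 0 := fun x hx => hx.1
  have hcont : ContinuousOn (fun t => |f t - g t|) (Icc (0 : ℝ) T) :=
    ((hf.mono hsub).sub (hg.mono hsub)).abs
  obtain ⟨t₀, ht₀, ht₀min⟩ := hcomp.exists_isMinOn ⟨0, le_refl 0, hT0⟩ hcont
  set m : ℝ := |f t₀ - g t₀| with hm
  have hmpos : 0 < m := abs_pos.mpr (sub_ne_zero.mpr (hne t₀ ht₀))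
  -- uniform convergence on [0, T]
  have hfnU : TendstoUniformlyOn fn f atTop (Icc (0 : ℝ) T) :=
    (tendstoLocallyUniformlyOn_iff_tendstoUniformlyOn_of_compact hcomp).mp (hfn.mono hsub)
  have hgnU : TendstoUniformlyOn gn g atTop (Icc (0 : ℝ) T) :=
    (tendstoLocallyUniformlyOn_iff_tendstoUniformlyOn_of_compact hcomp).mp (hgn.mono hsub)
  have hfev := (Metric.tendstoUniformlyOn_iff.mp hfnU) (m / 2) (by positivity)
  have hgev := (Metric.tendstoUniformlyOn_iff.mp hgnU) (m / 2) (by positivity)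
  filter_upwards [hfev, hgev] with n hfn' hgn'
  refine lt_of_lt_of_le hbb' (le_sInf ?_)
  rintro x ⟨t, ht0, rfl, heq⟩
  by_contra hlt
  push_neg at hlt
  have htT : t ≤ T := by
    have := (ENNReal.ofReal_lt_iff_lt_toReal ht0 hb'top).mp hlt
    exact this.le
  have htmem : t ∈ Icc (0 : ℝ) T := ⟨ht0, htT⟩
  have h1 : |f t - fn n t| < m / 2 := by
    have := hfn' t htmem
    rwa [Real.dist_eq] at this
  have h2 : |gn n t - g t| < m / 2 := by
    have := hgn' t htmem
    rwa [Real.dist_eq, abs_sub_comm] at this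
  have hkey : |f t - g t| < m := by
    calc |f t - g t| = |(f t - fn n t) + (gn n t - g t)| := by rw [heq]; ring_nf
      _ ≤ |f t - fn n t| + |gn n t - g t| := abs_add_le _ _
      _ < m / 2 + m / 2 := add_lt_add h1 h2
      _ = m := by ring
  exact absurd (ht₀min htmem) (not_le_of_gt hkey)
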